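/- arXiv:1709.01756 — 7 statements merged into one kernel-verified Lean document; each statement's English description precedes it below -/
import Mathlib

section
/- There is a dense operator range Y ⊂ ℓ₁ such that every non-zero element of Y has only a finite number of zero coordinates. -/
noncomputable section
open NormedSpace

/-- A subspace is an operator range if it is the image of an injective bounded linear
operator from an infinite-dimensional Banach space. -/
def IsOperatorRange {X : Type*} [NormedAddCommGroup X] [NormedSpace ℝ X]
    (Y : Submodule ℝ X) : Prop :=
  ∃ (E : Type) (_ : NormedAddCommGroup E) (_ : NormedSpace ℝ E),
    CompleteSpace E ∧ ¬ FiniteDimensional ℝ E ∧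
      ∃ T : E →L[ℝ] X, Function.Injective T ∧ Set.range T = (Y : Set X)

/-- The space `ℓ₁` of absolutely summable real sequences. -/
abbrev ellOne : Type := lp (fun _ : ℕ => ℝ) 1

/-!
Take `(T x)ₙ = 2⁻ⁿ fₓ(tₙ)` with `fₓ(z) = ∑ₖ xₖ zᵏ` and `tₙ = 1/(n+1)`. For `x ≠ 0` the power
series `fₓ` is analytic and nonzero near `0`, so by the identity theorem it vanishes at only
finitely many `tₙ`: `T` is injective and every nonzero `T x` has finitely many zero coordinates.
For density, the unit vectors satisfy `T eₖ = (2⁻ⁿ tₙᵏ)ₙ`; as `t` strictly decreases, `tⱼ⁻ᵏ` times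
the coordinates `≥ j` of `T eₖ` tend to `2⁻ʲ eⱼ` as `k → ∞`, and induction on `j` puts every `eⱼ`
in the closure of the range.
-/

open Filter Topology FormalMultilinearSeries

section PowerSeries

variable {𝕜 : Type*} [NontriviallyNormedField 𝕜] {c : ℕ → 𝕜}

theorem one_le_radius_ofScalars_of_summable (hc : Summable (‖c ·‖)) :
    1 ≤ (ofScalars 𝕜 c).radius := by
  simpa using (ofScalars 𝕜 c).le_radius_of_summable_norm (r := 1)
    (by simpa [ofScalars_norm] using hc)

theorem eq_zero_of_frequently_ofScalarsSum_eq_zero [CompleteSpace 𝕜]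
    (hc : 0 < (ofScalars 𝕜 c).radius) (h : ∃ᶠ z in 𝓝[≠] 0, ofScalarsSum (E := 𝕜) c z = 0) :
    c = 0 := by
  have hp : HasFPowerSeriesAt (ofScalarsSum c) (ofScalars 𝕜 c) 0 :=
    ((ofScalars 𝕜 c).hasFPowerSeriesOnBall hc).hasFPowerSeriesAt
  exact (ofScalars_series_eq_zero 𝕜).mp <|
    hp.eq_zero_of_eventually (hp.analyticAt.frequently_zero_iff_eventually_zero.mp h)

theorem finite_setOf_ofScalarsSum_eq_zero [CompleteSpace 𝕜] (hc : 0 < (ofScalars 𝕜 c).radius)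
    (hc₀ : c ≠ 0) {t : ℕ → 𝕜} (ht : Tendsto t atTop (𝓝[≠] 0)) :
    {n | ofScalarsSum (E := 𝕜) c (t n) = 0}.Finite := by
  by_contra hinf
  exact hc₀ <| eq_zero_of_frequently_ofScalarsSum_eq_zero hc <|
    ht.frequently (Nat.frequently_atTop_iff_infinite.mpr hinf)

end PowerSeries

namespace ellOne

theorem summable_norm (x : ellOne) : Summable (‖x ·‖) := by
  simpa using (lp.memℓp x).summable (by norm_num)

theorem norm_eq_tsum_norm (x : ellOne) : ‖x‖ = ∑' n, ‖x n‖ := by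
  simp [lp.norm_eq_tsum_rpow (by norm_num : 0 < (1 : ENNReal).toReal) x]

theorem memℓp_of_norm_le_geometric {f : ℕ → ℝ} {B : ℝ} (hf : ∀ n, ‖f n‖ ≤ (1 / 2) ^ n * B) :
    Memℓp f 1 :=
  memℓp_gen <| by
    simpa using (summable_geometric_two.mul_right B).of_nonneg_of_le (fun n => norm_nonneg _) hf

theorem norm_le_of_norm_apply_le_geometric {x : ellOne} {B : ℝ}
    (hx : ∀ n, ‖x n‖ ≤ (1 / 2) ^ n * B) : ‖x‖ ≤ 2 * B := by
  calc ‖x‖ = ∑' n, ‖x n‖ := norm_eq_tsum_norm x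
    _ ≤ ∑' n, (1 / 2 : ℝ) ^ n * B :=
      (summable_norm x).tsum_le_tsum hx (summable_geometric_two.mul_right B)
    _ = 2 * B := by rw [tsum_mul_right, tsum_geometric_two]

theorem linearIndependent_single :
    LinearIndependent ℝ fun j => (lp.single 1 j (1 : ℝ) : ellOne) := by
  rw [linearIndependent_iff']
  intro s g hg j hj
  have := congr_arg (fun x : ellOne => x j) hg
  simp only [lp.coeFn_sum, Finset.sum_apply, lp.coeFn_smul, Pi.smul_apply, lp.single_apply] at this
  simpa [Pi.single_apply, hj] using this

theorem not_finiteDimensional : ¬ FiniteDimensional ℝ ellOne := fun _ =>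
  Module.Finite.not_linearIndependent_of_infinite _ linearIndependent_single

theorem eq_top_of_isClosed_of_single_mem {C : Submodule ℝ ellOne} (hC : IsClosed (C : Set ellOne))
    (h : ∀ j, lp.single 1 j (1 : ℝ) ∈ C) : C = ⊤ := by
  refine Submodule.eq_top_iff'.mpr fun x =>
    hC.mem_of_tendsto (lp.hasSum_single ENNReal.one_ne_top x) ?_
  refine Eventually.of_forall fun s => C.sum_mem fun j _ => ?_
  simpa [← lp.single_smul] using C.smul_mem (x j) (h j)

def tail (j : ℕ) (x : ellOne) : ellOne :=
  ⟨fun n => if j ≤ n then x n else 0, (lp.memℓp x).mono' fun n => by split_ifs <;> simp⟩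

theorem tail_apply (j : ℕ) (x : ellOne) (n : ℕ) : tail j x n = if j ≤ n then x n else 0 :=
  rfl

theorem tail_zero (x : ellOne) : tail 0 x = x := by
  ext n
  simp [tail_apply]

theorem tail_eq_tail_succ_add (j : ℕ) (x : ellOne) :
    tail j x = tail (j + 1) x + x j • lp.single 1 j 1 := by
  ext n
  simp only [lp.coeFn_add, lp.coeFn_smul, Pi.add_apply, Pi.smul_apply, tail_apply, lp.single_apply,
    Pi.single_apply, smul_eq_mul]
  split_ifs <;> first | omega | simp_all

def powerEval (t : ℝ) (ht : |t| ≤ 1) : StrongDual ℝ ellOne :=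
  (lp.tsumCLM ℝ ℕ ℝ).comp <|
    lp.mapCLM 1 (fun k => t ^ k • ContinuousLinearMap.id ℝ ℝ) zero_le_one fun k => by
      simpa [norm_smul] using pow_le_one₀ (abs_nonneg t) ht

theorem powerEval_apply (t : ℝ) (ht : |t| ≤ 1) (x : ellOne) :
    powerEval t ht x = ofScalarsSum (E := ℝ) x t := by
  simp [powerEval, ofScalars_sum_eq, mul_comm]

theorem norm_powerEval_le (t : ℝ) (ht : |t| ≤ 1) : ‖powerEval t ht‖ ≤ 1 :=
  (ContinuousLinearMap.opNorm_comp_le _ _).trans <|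
    mul_le_one₀ lp.norm_tsumCLM_le (norm_nonneg _) (lp.norm_mapCLM_le _ _ _ _)

theorem ofScalarsSum_single (k : ℕ) (t : ℝ) :
    ofScalarsSum (E := ℝ) (lp.single 1 k (1 : ℝ) : ellOne) t = t ^ k := by
  simp [ofScalars_sum_eq, lp.single_apply, Pi.single_apply]

section WeightedDualMap

variable {E : Type*} [NormedAddCommGroup E] [NormedSpace ℝ E]

theorem norm_geometric_mul_apply_le {φ : StrongDual ℝ E} (hφ : ‖φ‖ ≤ 1) (n : ℕ) (x : E) :
    ‖(1 / 2 : ℝ) ^ n * φ x‖ ≤ (1 / 2) ^ n * ‖x‖ := by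
  rw [norm_mul, norm_pow, Real.norm_of_nonneg (by norm_num : (0 : ℝ) ≤ 1 / 2)]
  gcongr
  simpa using φ.le_of_opNorm_le hφ x

def weightedDualMap (φ : ℕ → StrongDual ℝ E) (hφ : ∀ n, ‖φ n‖ ≤ 1) : E →L[ℝ] ellOne :=
  LinearMap.mkContinuous
    { toFun x := ⟨fun n => (1 / 2) ^ n * φ n x,
        memℓp_of_norm_le_geometric (norm_geometric_mul_apply_le (hφ _) · x)⟩
      map_add' x y := by ext n; simp only [map_add, mul_add]; rfl
      map_smul' a x := by ext n; simp [mul_left_comm] }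
    2 fun x => norm_le_of_norm_apply_le_geometric (norm_geometric_mul_apply_le (hφ _) · x)

@[simp]
theorem weightedDualMap_apply (φ : ℕ → StrongDual ℝ E) (hφ : ∀ n, ‖φ n‖ ≤ 1) (x : E) (n : ℕ) :
    weightedDualMap φ hφ x n = (1 / 2) ^ n * φ n x :=
  rfl

end WeightedDualMap

section MomentOperator

variable (t : ℕ → ℝ) (ht : ∀ n, |t n| ≤ 1)

def momentOperator : ellOne →L[ℝ] ellOne :=
  weightedDualMap (fun n => powerEval (t n) (ht n)) fun n => norm_powerEval_le (t n) (ht n)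

variable {t ht}

theorem momentOperator_apply (x : ellOne) (n : ℕ) :
    momentOperator t ht x n = (1 / 2) ^ n * ofScalarsSum (E := ℝ) x (t n) := by
  simp [momentOperator, powerEval_apply]

theorem momentOperator_single_apply (k n : ℕ) :
    momentOperator t ht (lp.single 1 k 1) n = (1 / 2) ^ n * t n ^ k := by
  rw [momentOperator_apply, ofScalarsSum_single]

theorem finite_setOf_momentOperator_apply_eq_zero (ht₀ : Tendsto t atTop (𝓝[≠] 0)) {x : ellOne}
    (hx : x ≠ 0) : {n | momentOperator t ht x n = 0}.Finite := by
  have hc : 0 < (ofScalars ℝ (x : ℕ → ℝ)).radius :=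
    zero_lt_one.trans_le (one_le_radius_ofScalars_of_summable (summable_norm x))
  have hx' : (x : ℕ → ℝ) ≠ 0 := fun h => hx (lp.ext h)
  simpa [momentOperator_apply] using finite_setOf_ofScalarsSum_eq_zero hc hx' ht₀

theorem momentOperator_injective (ht₀ : Tendsto t atTop (𝓝[≠] 0)) :
    Function.Injective (momentOperator t ht) := by
  refine (injective_iff_map_eq_zero _).mpr fun x hx => ?_
  by_contra hx₀
  have hfin := finite_setOf_momentOperator_apply_eq_zero (ht := ht) ht₀ hx₀
  exact Set.infinite_univ (by simpa [hx] using hfin)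

theorem norm_tail_momentOperator_single_le (hpos : ∀ n, 0 < t n) (hanti : Antitone t)
    (j k : ℕ) : ‖tail j (momentOperator t ht (lp.single 1 k 1))‖ ≤ 2 * t j ^ k :=
  norm_le_of_norm_apply_le_geometric fun n => by
    rw [tail_apply, momentOperator_single_apply]
    split_ifs with h
    · rw [norm_mul, norm_pow, norm_pow, Real.norm_of_nonneg (hpos n).le,
        Real.norm_of_nonneg (by norm_num : (0 : ℝ) ≤ 1 / 2)]
      gcongr
      · exact (hpos n).le
      · exact hanti h
    · simp only [norm_zero]
      exact mul_nonneg (by positivity) (pow_nonneg (hpos j).le k)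

theorem tendsto_smul_tail_momentOperator_single (hpos : ∀ n, 0 < t n) (hanti : StrictAnti t)
    (j : ℕ) :
    Tendsto (fun k => (t j)⁻¹ ^ k • tail j (momentOperator t ht (lp.single 1 k 1))) atTop
      (𝓝 ((1 / 2 : ℝ) ^ j • lp.single 1 j 1)) := by
  have hsplit : ∀ k, (t j)⁻¹ ^ k • tail j (momentOperator t ht (lp.single 1 k 1)) =
      (t j)⁻¹ ^ k • tail (j + 1) (momentOperator t ht (lp.single 1 k 1)) +
        (1 / 2 : ℝ) ^ j • lp.single 1 j 1 := by
    intro k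
    rw [tail_eq_tail_succ_add j, smul_add, momentOperator_single_apply, smul_smul, mul_left_comm,
      ← mul_pow, inv_mul_cancel₀ (hpos j).ne', one_pow, mul_one]
  set q := t (j + 1) / t j
  have hq : q < 1 := (div_lt_one (hpos j)).mpr (hanti (Nat.lt_succ_self j))
  have hsmall : Tendsto
      (fun k => (t j)⁻¹ ^ k • tail (j + 1) (momentOperator t ht (lp.single 1 k 1))) atTop
      (𝓝 0) := by
    refine squeeze_zero_norm (fun k => ?_) <| by
      simpa using (tendsto_pow_atTop_nhds_zero_of_lt_one
        (div_nonneg (hpos _).le (hpos _).le) hq).const_mul 2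
    calc ‖(t j)⁻¹ ^ k • tail (j + 1) (momentOperator t ht (lp.single 1 k 1))‖
        ≤ (t j)⁻¹ ^ k * (2 * t (j + 1) ^ k) := by
          rw [norm_smul, norm_pow, norm_inv, Real.norm_of_nonneg (hpos j).le]
          exact mul_le_mul_of_nonneg_left
            (norm_tail_momentOperator_single_le hpos hanti.antitone _ _)
            (pow_nonneg (inv_nonneg.mpr (hpos j).le) k)
      _ = 2 * q ^ k := by rw [div_pow, div_eq_inv_mul, inv_pow]; ring
  have h := hsmall.add_const ((1 / 2 : ℝ) ^ j • lp.single 1 j (1 : ℝ))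
  rw [zero_add] at h
  exact h.congr fun k => (hsplit k).symm

theorem denseRange_momentOperator (hpos : ∀ n, 0 < t n) (hanti : StrictAnti t) :
    DenseRange (momentOperator t ht) := by
  rw [DenseRange, ← ContinuousLinearMap.coe_coe, ← LinearMap.coe_range,
    Submodule.dense_iff_topologicalClosure_eq_top]
  set C := (LinearMap.range (momentOperator t ht : ellOne →ₗ[ℝ] ellOne)).topologicalClosure
  have hC : IsClosed (C : Set ellOne) := Submodule.isClosed_topologicalClosure _
  have hstep : ∀ j, (∀ k, tail j (momentOperator t ht (lp.single 1 k 1)) ∈ C) →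
      lp.single 1 j 1 ∈ C := by
    intro j hj
    have h := hC.mem_of_tendsto (tendsto_smul_tail_momentOperator_single hpos hanti j)
      (Eventually.of_forall fun k => C.smul_mem _ (hj k))
    simpa [smul_smul, ← mul_pow] using C.smul_mem ((2 : ℝ) ^ j) h
  have htail : ∀ j k, tail j (momentOperator t ht (lp.single 1 k 1)) ∈ C := by
    intro j
    induction j with
    | zero => exact fun k => (tail_zero _).symm ▸ Submodule.le_topologicalClosure _ ⟨_, rfl⟩
    | succ j ih =>
      intro k
      rw [eq_sub_of_add_eq (tail_eq_tail_succ_add j _).symm]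
      exact C.sub_mem (ih k) (C.smul_mem _ (hstep j ih))
  exact eq_top_of_isClosed_of_single_mem hC fun j => hstep j (htail j)

end MomentOperator

end ellOne

open ellOne in
theorem dense_operator_range_in_ell1_with_finitely_many_zero_coordinates :
    ∃ Y : Submodule ℝ ellOne, IsOperatorRange Y ∧ Dense (Y : Set ellOne) ∧
      ∀ y : ellOne, y ∈ Y → y ≠ 0 → {n : ℕ | y n = 0}.Finite := by
  set t : ℕ → ℝ := fun n => 1 / (n + 1)
  have ht : ∀ n, |t n| ≤ 1 := fun n => by
    rw [abs_of_pos (by positivity)]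
    exact div_le_one_of_le₀ (by simp) (by positivity)
  have hpos : ∀ n, 0 < t n := fun n => by positivity
  have hanti : StrictAnti t := fun m n h => by dsimp only [t]; gcongr
  have ht₀ : Tendsto t atTop (𝓝[≠] 0) :=
    tendsto_nhdsWithin_of_tendsto_nhds_of_eventually_within _
      tendsto_one_div_add_atTop_nhds_zero_nat (Eventually.of_forall fun n => (hpos n).ne')
  set T := momentOperator t ht
  refine ⟨LinearMap.range (T : ellOne →ₗ[ℝ] ellOne),
    ⟨ellOne, _, _, inferInstance, not_finiteDimensional, T, momentOperator_injective ht₀,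
      (LinearMap.coe_range _).symm⟩, ?_, ?_⟩
  · rw [LinearMap.coe_range, ContinuousLinearMap.coe_coe]
    exact denseRange_momentOperator hpos hanti
  · rintro _ ⟨x, rfl⟩ hTx
    exact finite_setOf_momentOperator_apply_eq_zero ht₀ (by rintro rfl; exact hTx (map_zero T))
end
end

section
/- Let X be a real Banach space and let Y ⊂ X be an operator range. Then for every sequence (uₙ) in Y there is a sequence of reals (sₙ) with sₙ ∈ (0,1] for all n such that for every x = (x₁, x₂, …) ∈ ℓ₁ the series Σₙ sₙ xₙ uₙ converges in X to an element of Y. -/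
noncomputable section
open NormedSpace Filter Topology

theorem operator_range_absorbs_ell1_combinations
    (X : Type*) [NormedAddCommGroup X] [NormedSpace ℝ X] [CompleteSpace X]
    (Y : Submodule ℝ X) (hY : IsOperatorRange Y)
    (u : ℕ → X) (hu : ∀ n, u n ∈ Y) :
    ∃ s : ℕ → ℝ, (∀ n, s n ∈ Set.Ioc (0 : ℝ) 1) ∧
      ∀ x : ellOne, ∃ v ∈ Y,
        Tendsto (fun N => ∑ n ∈ Finset.range N, (s n * x n) • u n) atTop (𝓝 v) := by
  obtain ⟨E, _, _, hE, -, T, -, hTrange⟩ := hY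
  haveI := hE
  have hmem : ∀ n, u n ∈ Set.range T := fun n => hTrange ▸ hu n
  choose e he using hmem
  refine ⟨fun n => (1 + ‖e n‖)⁻¹, fun n => ?_, fun x => ?_⟩
  · constructor
    · positivity
    · rw [inv_le_one_iff₀]
      right
      linarith [norm_nonneg (e n)]
  · set s : ℕ → ℝ := fun n => (1 + ‖e n‖)⁻¹ with hs
    have hsum : Summable (fun n => (s n * x n) • e n) := by
      apply Summable.of_norm
      have hx : Summable (fun n => ‖x n‖) := by
        have := lp.memℓp x
        have h2 := this.summable (p := 1) (by norm_num)
        simpa [ENNReal.toReal_one] using h2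
      apply hx.of_nonneg_of_le (fun n => norm_nonneg _)
      intro n
      have h1 : 0 < 1 + ‖e n‖ := by positivity
      rw [norm_smul, norm_mul]
      have : ‖s n‖ * ‖e n‖ ≤ 1 := by
        rw [Real.norm_eq_abs, abs_of_pos (by positivity : (0:ℝ) < s n)]
        rw [hs]
        rw [inv_mul_le_iff₀ h1]
        linarith
      calc ‖s n‖ * ‖x n‖ * ‖e n‖ = ‖s n‖ * ‖e n‖ * ‖x n‖ := by ring
        _ ≤ 1 * ‖x n‖ := by
            apply mul_le_mul_of_nonneg_right this (norm_nonneg _)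
        _ = ‖x n‖ := one_mul _
    obtain ⟨a, ha⟩ := hsum
    refine ⟨T a, ?_, ?_⟩
    · rw [← SetLike.mem_coe, ← hTrange]; exact ⟨a, rfl⟩
    · have := (ha.tendsto_sum_nat).comp (tendsto_id)
      have h2 := (T.continuous.tendsto a).comp ha.tendsto_sum_nat
      convert h2 using 2 with N
      simp [Function.comp, map_sum, he]
end
end

section
/- Let X be a real Banach space and let Y ⊂ X be a separable infinite-dimensional operator range. Then there is an injective bounded linear operator T : ℓ₁ → X of norm one with T(ℓ₁) ⊂ Y such that the set {T(eₙ)/‖T(eₙ)‖ : n ∈ ℕ} is dense in the unit sphere S_Y = {y ∈ Y : ‖y‖ = 1} of Y. -/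
noncomputable section
open NormedSpace

/-! Write `Y = R(E)` with `R : E → X` injective and `E` an infinite-dimensional Banach space, and
work in `E`. Since a finite-dimensional subspace of `E` has dense complement, Hahn–Banach and
dependent choice give `xₙ ∈ E` and functionals `hₙ` with `hₙ xₙ = 1` and `hⱼ xₙ = 0` for `n < j`,
such that `R xₙ` approximates the `m`-th term of a dense sequence of `Y` whenever
`n = Nat.pair m k`, ever better as `k` grows. With weights `cₙ > 0` decaying fast relative to
the `‖hⱼ‖`, the operator `S : ℓ₁ → E`, `eₙ ↦ cₙ xₙ`, is injective, because the triangular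
system `hⱼ ∘ S` recovers each coordinate of `a` up to an error `‖a‖ / 2 ^ (j + 2)`.
Then `T = R ∘ S / ‖R ∘ S‖` works: `T eₙ / ‖T eₙ‖ = R xₙ / ‖R xₙ‖`. -/

open Set Filter Topology

theorem exists_seq_of_forall_fin_exists {σ : Type*} (P : (n : ℕ) → (Fin n → σ) → σ → Prop)
    (h : ∀ n (f : Fin n → σ), ∃ s, P n f s) : ∃ v : ℕ → σ, ∀ n, P n (fun k => v k) (v n) := by
  refine ⟨Nat.strongRec fun n ih => (h n fun k => ih k k.isLt).choose, fun n => ?_⟩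
  dsimp only
  rw [Nat.strongRec_eq _ n]
  exact (h n _).choose_spec

open Finset in
theorem exists_pos_le_one_mul_le_div_two_pow (c : ℕ → ℝ) :
    ∃ μ : ℕ → ℝ, (∀ n, 0 < μ n) ∧ (∀ n, μ n ≤ 1) ∧
      ∀ j n, j < n → μ n * |c j| ≤ μ j / 2 ^ (n + 1) := by
  -- `μ n = (e 0 ⋯ e n)⁻¹`, where the last factor `e n` alone beats `2 ^ (n + 1) * |c j|`, `j < n`
  set e : ℕ → ℝ := fun i => 2 ^ (i + 1) * (1 + ∑ k ∈ range i, |c k|)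
  have he : ∀ i, 1 ≤ e i := fun i =>
    one_le_mul_of_one_le_of_one_le (one_le_pow₀ one_le_two)
      (le_add_of_nonneg_right (sum_nonneg fun _ _ => abs_nonneg _))
  have hce : ∀ j i, j < i → 2 ^ (i + 1) * |c j| ≤ e i := fun j i hji => by
    have := single_le_sum (fun k _ => abs_nonneg (c k)) (mem_range.2 hji)
    show _ ≤ 2 ^ (i + 1) * _
    gcongr
    linarith
  set P : ℕ → ℝ := fun n => ∏ i ∈ range (n + 1), e i
  have hP1 : ∀ n, 1 ≤ P n := fun n => one_le_prod fun i _ => he i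
  have hPmono : Monotone P := monotone_nat_of_le_succ fun n => by
    simp only [P, prod_range_succ _ (n + 1)]
    exact le_mul_of_one_le_right (zero_le_one.trans (hP1 n)) (he _)
  refine ⟨fun n => (P n)⁻¹, fun n => inv_pos.2 (zero_lt_one.trans_le (hP1 n)),
    fun n => inv_le_one_of_one_le₀ (hP1 n), fun j n hjn => ?_⟩
  obtain ⟨m, rfl⟩ : ∃ m, n = m + 1 := ⟨n - 1, by omega⟩
  have key : P j * (2 ^ (m + 1 + 1) * |c j|) ≤ P (m + 1) := by
    rw [show P (m + 1) = P m * e (m + 1) from prod_range_succ _ (m + 1)]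
    gcongr
    · exact hPmono (Nat.lt_succ_iff.1 hjn)
    · exact hce j _ hjn
  have hPj : 0 < P j := zero_lt_one.trans_le (hP1 j)
  have hPn : 0 < P (m + 1) := zero_lt_one.trans_le (hP1 _)
  field_simp
  linarith

theorem lp.hasSum_norm_one {α : Type*} {E : α → Type*} [∀ i, NormedAddCommGroup (E i)]
    (f : lp E 1) : HasSum (fun i => ‖f i‖) ‖f‖ := by
  simpa using lp.hasSum_norm (p := 1) (by norm_num) f

theorem exists_lp_one_map_single {ι E : Type*} [DecidableEq ι] [NormedAddCommGroup E]
    [NormedSpace ℝ E] [CompleteSpace E] (w : ι → E) {C : ℝ} (hw : ∀ i, ‖w i‖ ≤ C) :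
    ∃ S : lp (fun _ : ι => ℝ) 1 →L[ℝ] E, ∀ i, S (lp.single 1 i 1) = w i := by
  have hbound : ∀ (a : lp (fun _ : ι => ℝ) 1) i, ‖a i • w i‖ ≤ C * ‖a i‖ := fun a i => by
    rw [norm_smul, mul_comm]
    exact mul_le_mul_of_nonneg_right (hw i) (norm_nonneg _)
  have hsum : ∀ a : lp (fun _ : ι => ℝ) 1, Summable fun i => a i • w i := fun a =>
    .of_norm_bounded ((lp.hasSum_norm_one a).summable.mul_left C) (hbound a)
  let L : lp (fun _ : ι => ℝ) 1 →ₗ[ℝ] E :=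
    { toFun := fun a => ∑' i, a i • w i
      map_add' := fun a b => by
        simp only [lp.coeFn_add, Pi.add_apply, add_smul, (hsum a).tsum_add (hsum b)]
      map_smul' := fun c a => by
        simp only [lp.coeFn_smul, Pi.smul_apply, smul_assoc, (hsum a).tsum_const_smul c,
          RingHom.id_apply] }
  refine ⟨L.mkContinuous C fun a => ?_, fun i => ?_⟩
  · exact (hsum a).hasSum.norm_le_of_bounded ((lp.hasSum_norm_one a).mul_left C) (hbound a)
  · refine (tsum_eq_single i fun j hj => ?_).trans ?_
    · simp [hj]
    · simp

local notation "𝐞" n => (lp.single 1 n (1 : ℝ) : ellOne)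

theorem ellOne.eq_zero_of_triangular (φ : ℕ → ellOne →L[ℝ] ℝ) (hdiag : ∀ j, φ j (𝐞 j) = 1)
    (hlow : ∀ j n, n < j → φ j (𝐞 n) = 0) (hup : ∀ j n, j < n → |φ j (𝐞 n)| ≤ 1 / 2 ^ (n + 1))
    {a : ellOne} (ha : ∀ j, φ j a = 0) : a = 0 := by
  have hexp : ∀ j, HasSum (fun n => a n * φ j (𝐞 n)) 0 := fun j => by
    rw [← ha j]
    convert (lp.hasSum_single ENNReal.one_ne_top a).mapL (φ j) using 2 with n
    have hsingle : lp.single 1 n (a n) = a n • 𝐞 n := by rw [← lp.single_smul, smul_eq_mul, mul_one]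
    rw [hsingle, map_smul, smul_eq_mul]
  have hcoord : ∀ j, |a j| ≤ ‖a‖ / 2 / 2 / 2 ^ j := fun j => by
    have hrest := (hexp j).update j 0
    rw [hdiag j, mul_one, zero_sub, add_zero] at hrest
    refine (norm_neg (a j)).symm.le.trans (hrest.norm_le_of_bounded
      ((lp.hasSum_norm_one a).mul_left (1 / 2 / 2 / 2 ^ j)) fun n => ?_) |>.trans_eq (by ring)
    rcases lt_trichotomy n j with hnj | rfl | hjn
    · rw [Function.update_of_ne hnj.ne, hlow j n hnj, mul_zero, norm_zero]
      positivity
    · rw [Function.update_self, norm_zero]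
      positivity
    · rw [Function.update_of_ne hjn.ne', norm_mul, mul_comm]
      gcongr
      refine (hup j n hjn).trans ?_
      rw [div_div, div_div, ← pow_succ', ← pow_succ']
      gcongr
      · norm_num
      · omega
  have hhalf : ‖a‖ ≤ ‖a‖ / 2 :=
    hasSum_le hcoord (lp.hasSum_norm_one a) (hasSum_geometric_two' (‖a‖ / 2))
  exact norm_le_zero_iff.1 (by linarith)

theorem exists_injective_ellOne_map_single_eq_smul {E : Type*} [NormedAddCommGroup E]
    [NormedSpace ℝ E] [CompleteSpace E] (x : ℕ → E) (h : ℕ → E →L[ℝ] ℝ)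
    (hdiag : ∀ n, h n (x n) = 1) (hlow : ∀ j n, n < j → h j (x n) = 0) :
    ∃ S : ellOne →L[ℝ] E, Function.Injective S ∧ ∀ n, ∃ c : ℝ, 0 < c ∧ S (𝐞 n) = c • x n := by
  have hx : ∀ n, 0 < ‖x n‖ := fun n => norm_pos_iff.2 fun h0 => by simpa [h0] using hdiag n
  obtain ⟨μ, hμ0, hμ1, hμ⟩ := exists_pos_le_one_mul_le_div_two_pow fun j => ‖h j‖ * ‖x j‖
  set c : ℕ → ℝ := fun n => μ n / ‖x n‖
  have hc : ∀ n, 0 < c n := fun n => div_pos (hμ0 n) (hx n)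
  obtain ⟨S, hS⟩ := exists_lp_one_map_single (fun n => c n • x n) (C := 1) fun n => by
    rw [norm_smul, Real.norm_of_nonneg (hc n).le, div_mul_cancel₀ _ (hx n).ne']
    exact hμ1 n
  refine ⟨S, (injective_iff_map_eq_zero S).2 fun a ha => ?_, fun n => ⟨c n, hc n, hS n⟩⟩
  refine ellOne.eq_zero_of_triangular (fun j => (c j)⁻¹ • (h j).comp S) (fun j => ?_)
    (fun j n hnj => ?_) (fun j n hjn => ?_) fun j => by simp [ha]
  · simp [hS, hdiag, (hc j).ne']
  · simp [hS, hlow j n hnj]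
  · have hhx : |h j (x n)| ≤ ‖h j‖ * ‖x n‖ := (h j).le_opNorm (x n)
    have := hμ j n hjn
    rw [abs_of_nonneg (by positivity)] at this
    calc |((c j)⁻¹ • (h j).comp S) (𝐞 n)| = (c j)⁻¹ * c n * |h j (x n)| := by
          simp [hS, abs_mul, abs_of_pos (hc j), abs_of_pos (hc n), mul_assoc]
      _ ≤ (c j)⁻¹ * c n * (‖h j‖ * ‖x n‖) :=
          mul_le_mul_of_nonneg_left hhx (mul_pos (inv_pos.2 (hc j)) (hc n)).le
      _ = μ n * (‖h j‖ * ‖x j‖) / μ j := by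
          simp only [c]
          field_simp [(hx n).ne', (hx j).ne', (hμ0 j).ne']
      _ ≤ 1 / 2 ^ (n + 1) := by
          rwa [div_le_iff₀ (hμ0 j), one_div, inv_mul_eq_div]

theorem Submodule.dense_compl_of_ne_top {E : Type*} [NormedAddCommGroup E] [NormedSpace ℝ E]
    {F : Submodule ℝ E} (hF : F ≠ ⊤) : Dense (F : Set E)ᶜ :=
  interior_eq_empty_iff_dense_compl.1 <|
    not_nonempty_iff_eq_empty.1 fun h => hF (F.eq_top_of_nonempty_interior' h)

theorem Submodule.exists_dual_eq_one_of_notMem {E : Type*} [NormedAddCommGroup E]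
    [NormedSpace ℝ E] {F : Submodule ℝ E} (hF : IsClosed (F : Set E)) {v : E} (hv : v ∉ F) :
    ∃ g : E →L[ℝ] ℝ, g v = 1 ∧ ∀ u ∈ F, g u = 0 := by
  obtain ⟨g, hg⟩ := SeparatingDual.exists_eq_one (R := ℝ) (x := F.mkQ v) (by simpa using hv)
  exact ⟨g.comp F.mkQL, hg, fun u hu => by simp [(Submodule.Quotient.mk_eq_zero F).2 hu]⟩

theorem exists_dual_eq_one_of_finite_of_dist_lt {E X : Type*} [NormedAddCommGroup E]
    [NormedSpace ℝ E] [PseudoMetricSpace X] (hE : ¬ FiniteDimensional ℝ E) {f : E → X}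
    (hf : Continuous f) {s : Set E} (hs : s.Finite) {y : X} (hy : y ∈ range f) {ε : ℝ}
    (hε : 0 < ε) : ∃ (x : E) (g : E →L[ℝ] ℝ), g x = 1 ∧ (∀ u ∈ s, g u = 0) ∧ dist (f x) y < ε := by
  set F := Submodule.span ℝ s
  have : FiniteDimensional ℝ F := FiniteDimensional.span_of_finite ℝ hs
  have hF : F ≠ ⊤ := fun htop => hE <| Module.finite_def.2 (htop ▸ Submodule.fg_span hs)
  obtain ⟨x₀, rfl⟩ := hy
  have hx₀ : f x₀ ∈ closure (f '' (F : Set E)ᶜ) := mem_closure_image hf.continuousAt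
    ((Submodule.dense_compl_of_ne_top hF).closure_eq ▸ mem_univ x₀)
  obtain ⟨_, ⟨x, hxF, rfl⟩, hdist⟩ := Metric.mem_closure_iff.1 hx₀ ε hε
  obtain ⟨g, hgx, hgF⟩ := Submodule.exists_dual_eq_one_of_notMem F.closed_of_finiteDimensional hxF
  exact ⟨x, g, hgx, fun u hu => hgF u (Submodule.subset_span hu), by rwa [dist_comm]⟩

theorem exists_triangular_system_dist_lt {E X : Type*} [NormedAddCommGroup E]
    [NormedSpace ℝ E] [PseudoMetricSpace X] (hE : ¬ FiniteDimensional ℝ E) {f : E → X}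
    (hf : Continuous f) {y : ℕ → X} (hy : ∀ n, y n ∈ range f) {ε : ℕ → ℝ} (hε : ∀ n, 0 < ε n) :
    ∃ (x : ℕ → E) (h : ℕ → E →L[ℝ] ℝ), (∀ n, h n (x n) = 1) ∧
      (∀ j n, n < j → h j (x n) = 0) ∧ ∀ n, dist (f (x n)) (y n) < ε n := by
  obtain ⟨v, hv⟩ := exists_seq_of_forall_fin_exists
    (fun n (prev : Fin n → E × (E →L[ℝ] ℝ)) (s : E × (E →L[ℝ] ℝ)) =>
      s.2 s.1 = 1 ∧ (∀ k, s.2 (prev k).1 = 0) ∧ dist (f s.1) (y n) < ε n)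
    fun n prev => by
      obtain ⟨x, g, hgx, hg, hdist⟩ := exists_dual_eq_one_of_finite_of_dist_lt hE hf
        (finite_range fun k => (prev k).1) (hy n) (hε n)
      exact ⟨(x, g), hgx, fun k => hg _ (mem_range_self k), hdist⟩
  exact ⟨fun n => (v n).1, fun n => (v n).2, fun n => (hv n).1,
    fun j n hnj => (hv j).2.1 ⟨n, hnj⟩, fun n => (hv n).2.2⟩

theorem range_subset_closure_range_of_tendsto_dist_unpair {α : Type*} [PseudoMetricSpace α]
    {d u : ℕ → α} (h : Tendsto (fun n => dist (u n) (d n.unpair.1)) atTop (𝓝 0)) :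
    range d ⊆ closure (range u) := by
  rintro _ ⟨m, rfl⟩
  have hpair : Tendsto (Nat.pair m) atTop atTop :=
    tendsto_atTop_mono (Nat.right_le_pair m) tendsto_id
  have hlim : Tendsto (fun k => u (Nat.pair m k)) atTop (𝓝 (d m)) :=
    tendsto_iff_dist_tendsto_zero.2 (by simpa [Function.comp_def] using h.comp hpair)
  exact mem_closure_of_tendsto hlim (Eventually.of_forall fun k => mem_range_self _)

theorem NormedSpace.normalize_mem_closure_range {X : Type*} [NormedAddCommGroup X]
    [NormedSpace ℝ X] {u : ℕ → X} {y : X} (hy : y ∈ closure (range u)) (hy0 : y ≠ 0) :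
    normalize y ∈ closure (range fun n => normalize (u n)) := by
  rw [range_comp' normalize u]
  exact mem_closure_image
    ((continuous_norm.continuousAt.inv₀ (norm_ne_zero_iff.2 hy0)).smul continuousAt_id) hy

theorem TopologicalSpace.IsSeparable.exists_seq_dense {α : Type*} [TopologicalSpace α]
    [TopologicalSpace.PseudoMetrizableSpace α] {s : Set α} (hs : IsSeparable s)
    (hne : s.Nonempty) : ∃ d : ℕ → α, range d ⊆ s ∧ s ⊆ closure (range d) := by
  obtain ⟨t, hts, htc, hst⟩ := hs.exists_countable_dense_subset
  obtain ⟨d, rfl⟩ := htc.exists_eq_range (closure_nonempty_iff.1 (hne.mono hst))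
  exact ⟨d, hts, hst⟩

theorem dense_normalized_singles_in_operator_range_general
    (X : Type*) [NormedAddCommGroup X] [NormedSpace ℝ X]
    (Y : Submodule ℝ X) (hY : IsOperatorRange Y)
    (hsep : TopologicalSpace.IsSeparable (Y : Set X)) :
    ∃ T : ellOne →L[ℝ] X, Function.Injective T ∧ ‖T‖ = 1 ∧
      Set.range T ⊆ (Y : Set X) ∧
      {y : X | y ∈ Y ∧ ‖y‖ = 1} ⊆
        closure (Set.range fun n : ℕ =>
          ‖T (lp.single 1 n (1 : ℝ))‖⁻¹ • T (lp.single 1 n (1 : ℝ))) := by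
  obtain ⟨E, _, _, _, hE, R, hRinj, hRrange⟩ := hY
  obtain ⟨d, hdY, hYd⟩ := hsep.exists_seq_dense ⟨0, Y.zero_mem⟩
  obtain ⟨x, h, hdiag, hlow, hdist⟩ := exists_triangular_system_dist_lt hE R.continuous
    (y := fun n => d n.unpair.1) (fun n => hRrange ▸ hdY (mem_range_self _))
    (ε := fun n => 1 / (n + 1)) fun n => Nat.one_div_pos_of_nat
  obtain ⟨S, hSinj, hSe⟩ := exists_injective_ellOne_map_single_eq_smul x h hdiag hlow
  set T₀ := R.comp S
  have hT₀ : Function.Injective T₀ := hRinj.comp hSinj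
  have hT₀0 : T₀ ≠ 0 := fun h0 => by
    simpa using congrArg (fun a : ellOne => a 0) (hT₀ (show T₀ (𝐞 0) = T₀ 0 by simp [h0]))
  have hdense : range d ⊆ closure (range fun n => R (x n)) :=
    range_subset_closure_range_of_tendsto_dist_unpair <| squeeze_zero (fun n => dist_nonneg)
      (fun n => (hdist n).le) tendsto_one_div_add_atTop_nhds_zero_nat
  refine ⟨normalize T₀, (smul_right_injective X (inv_ne_zero (norm_ne_zero_iff.2 hT₀0))).comp hT₀,
    norm_normalize_eq_one_iff.2 hT₀0, ?_, ?_⟩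
  · rintro _ ⟨a, rfl⟩
    exact Y.smul_mem _ (hRrange.subset (mem_range_self (S a)))
  · rintro ζ ⟨hζY, hζ1⟩
    have hζ := closure_minimal hdense isClosed_closure (hYd hζY)
    rw [← normalize_eq_self_of_norm_eq_one hζ1]
    convert normalize_mem_closure_range hζ (norm_ne_zero_iff.1 (hζ1 ▸ one_ne_zero)) using 4 with n
    obtain ⟨c, hc, hcS⟩ := hSe n
    show normalize (‖T₀‖⁻¹ • R (S _)) = _
    rw [hcS, map_smul, smul_smul, normalize_smul_of_pos (by positivity)]

theorem dense_normalized_singles_in_operator_range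
    (X : Type*) [NormedAddCommGroup X] [NormedSpace ℝ X] [CompleteSpace X]
    (Y : Submodule ℝ X) (hY : IsOperatorRange Y)
    (hsep : TopologicalSpace.IsSeparable (Y : Set X)) :
    ∃ T : ellOne →L[ℝ] X, Function.Injective T ∧ ‖T‖ = 1 ∧
      Set.range T ⊆ (Y : Set X) ∧
      {y : X | y ∈ Y ∧ ‖y‖ = 1} ⊆
        closure (Set.range fun n : ℕ =>
          ‖T (lp.single 1 n (1 : ℝ))‖⁻¹ • T (lp.single 1 n (1 : ℝ))) :=
  dense_normalized_singles_in_operator_range_general X Y hY hsep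
end
end

section
/- Let X be a closed subspace of ℓ∞ which contains the canonical copy of c₀. Then, given x in the closed unit ball of X, there are two sequences (yₙ), (zₙ) in the unit sphere of X that both converge weakly to x and such that eₙ*(yₙ − zₙ) = 2 for every n ∈ ℕ, where eₙ* denotes the n-th coordinate functional on X. -/
noncomputable section
open NormedSpace Filter Topology

/-- The space `ℓ∞` of bounded real sequences. -/
abbrev ellInfty : Type := lp (fun _ : ℕ => ℝ) ⊤

/-!
The unit vectors `eₙ` lie in `X` because `c₀ ⊆ X`, and they are weakly null: every signed finite
sum `∑ ±eᵢ` has norm at most `1`, so `∑ |f eₙ| ≤ ‖f‖` for each functional `f`. Put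
`yₙ = x + (1 - xₙ) eₙ` and `zₙ = x - (1 + xₙ) eₙ`; these replace the `n`-th coordinate of `x` by `1`
and `-1` respectively, so they lie on the unit sphere, and they converge weakly to `x` since the
coefficients are bounded.
-/

theorem summable_abs_apply_of_norm_sum_smul_le {ι E : Type*} [NormedAddCommGroup E]
    [NormedSpace ℝ E] {u : ι → E} {C : ℝ}
    (hu : ∀ (s : Finset ι) (σ : ι → ℝ), (∀ i, |σ i| ≤ 1) → ‖∑ i ∈ s, σ i • u i‖ ≤ C)
    (f : StrongDual ℝ E) : Summable fun i => |f (u i)| := by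
  set σ : ι → ℝ := fun i => SignType.sign (f (u i))
  have hσ : ∀ i, |σ i| ≤ 1 := fun i => by
    simp only [σ]; cases SignType.sign (f (u i)) <;> simp
  refine summable_of_sum_le (c := ‖f‖ * C) (fun i => abs_nonneg _) fun s => ?_
  calc ∑ i ∈ s, |f (u i)| = f (∑ i ∈ s, σ i • u i) := by
        simp only [map_sum, map_smul, smul_eq_mul, σ, sign_mul_self]
    _ ≤ ‖f‖ * ‖∑ i ∈ s, σ i • u i‖ := (le_abs_self _).trans (f.le_opNorm _)
    _ ≤ ‖f‖ * C := by gcongr; exact hu s σ hσ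

theorem tendsto_add_smul_of_tendsto_zero {𝕜 E : Type*} [NontriviallyNormedField 𝕜]
    [NormedAddCommGroup E] [NormedSpace 𝕜 E] {e : ℕ → E} {c : ℕ → 𝕜}
    (hc : IsBoundedUnder (· ≤ ·) atTop (norm ∘ c)) (f : StrongDual 𝕜 E)
    (he : Tendsto (fun n => f (e n)) atTop (𝓝 0)) (x : E) :
    Tendsto (fun n => f (x + c n • e n)) atTop (𝓝 (f x)) := by
  simpa using tendsto_const_nhds.add (isBoundedUnder_le_mul_tendsto_zero hc he)

namespace lp

variable {α : Type*} {E : α → Type*} [∀ i, NormedAddCommGroup (E i)]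

theorem norm_eq_of_forall_le_of_norm_apply_eq {f : lp E ⊤} {C : ℝ} (hf : ∀ i, ‖f i‖ ≤ C)
    {i : α} (hi : ‖f i‖ = C) : ‖f‖ = C :=
  le_antisymm (norm_le_of_forall_le (hi ▸ norm_nonneg _) hf)
    (hi ▸ norm_apply_le_norm ENNReal.top_ne_zero f i)

variable [DecidableEq α]

theorem norm_add_single_eq {f : lp E ⊤} {C : ℝ} (hf : ‖f‖ ≤ C) {i : α} {a : E i}
    (ha : ‖f i + a‖ = C) : ‖f + lp.single ⊤ i a‖ = C := by
  refine norm_eq_of_forall_le_of_norm_apply_eq (i := i) (fun j => ?_) (by simpa using ha)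
  rcases eq_or_ne j i with rfl | hj
  · simp [ha]
  · simpa [hj] using (norm_apply_le_norm ENNReal.top_ne_zero f j).trans hf

theorem norm_sum_single_le {s : Finset α} {a : ∀ i, E i} {C : ℝ} (hC : 0 ≤ C)
    (ha : ∀ i, ‖a i‖ ≤ C) : ‖∑ i ∈ s, lp.single ⊤ i (a i)‖ ≤ C := by
  refine norm_le_of_forall_le hC fun j => ?_
  rw [coeFn_sum, Finset.sum_apply]
  simp only [lp.single_apply, Finset.sum_pi_single]
  split_ifs
  · exact ha j
  · simpa using hC

end lp

theorem tendsto_dual_apply_of_coe_eq_single {X : Submodule ℝ ellInfty} {e : ℕ → X}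
    (he : ∀ n, (e n : ellInfty) = lp.single ⊤ n 1) (f : StrongDual ℝ X) :
    Tendsto (fun n => f (e n)) atTop (𝓝 0) := by
  refine (summable_abs_apply_of_norm_sum_smul_le (C := 1) (fun s σ hσ => ?_) f).of_abs
    |>.tendsto_atTop_zero
  rw [Submodule.coe_norm, Submodule.coe_sum]
  simp only [Submodule.coe_smul, he, ← lp.single_smul, smul_eq_mul, mul_one]
  exact lp.norm_sum_single_le zero_le_one (by simpa using hσ)

theorem two_sequences_in_sphere_weakly_converging_general
    (X : Submodule ℝ ellInfty)
    (hc0 : ∀ y : ellInfty, Tendsto (fun n => y n) atTop (𝓝 (0 : ℝ)) → y ∈ X)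
    (x : X) (hx : ‖x‖ ≤ 1) :
    ∃ y z : ℕ → X, (∀ n, ‖y n‖ = 1) ∧ (∀ n, ‖z n‖ = 1) ∧
      (∀ f : StrongDual ℝ X, Tendsto (fun k => f (y k)) atTop (𝓝 (f x))) ∧
      (∀ f : StrongDual ℝ X, Tendsto (fun k => f (z k)) atTop (𝓝 (f x))) ∧
      ∀ n : ℕ, (y n : ellInfty) n - (z n : ellInfty) n = 2 := by
  have hsingle : ∀ n, lp.single ⊤ n (1 : ℝ) ∈ X := fun n =>
    hc0 _ <| tendsto_const_nhds.congr' <| (eventually_gt_atTop n).mono fun k hk => by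
      simp [hk.ne']
  set e : ℕ → X := fun n => ⟨lp.single ⊤ n 1, hsingle n⟩
  have coe_add_smul : ∀ (c : ℝ) n,
      ((x + c • e n : X) : ellInfty) = (x : ellInfty) + lp.single ⊤ n c := fun c n => by
    simp [e, ← lp.single_smul]
  have hx_abs : ∀ n, |(x : ellInfty) n| ≤ 1 :=
    fun n => (lp.norm_apply_le_norm ENNReal.top_ne_zero (x : ellInfty) n).trans hx
  have weakly : ∀ c : ℕ → ℝ, (∀ n, |c n| ≤ 2) → ∀ f : StrongDual ℝ X,
      Tendsto (fun n => f (x + c n • e n)) atTop (𝓝 (f x)) := fun c hc f =>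
    tendsto_add_smul_of_tendsto_zero
      (isBoundedUnder_of ⟨2, fun n => (Real.norm_eq_abs _).trans_le (hc n)⟩) f
      (tendsto_dual_apply_of_coe_eq_single (fun _ => rfl) f) x
  refine ⟨fun n => x + (1 - (x : ellInfty) n) • e n,
    fun n => x + (-(1 + (x : ellInfty) n)) • e n, fun n => ?_, fun n => ?_,
    weakly _ fun n => ?_, weakly _ fun n => ?_, fun n => ?_⟩
  · rw [Submodule.coe_norm, coe_add_smul]
    exact lp.norm_add_single_eq hx (by simp)
  · rw [Submodule.coe_norm, coe_add_smul]
    exact lp.norm_add_single_eq hx (by simp)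
  · exact abs_le.2 (by constructor <;> linarith [abs_le.1 (hx_abs n)])
  · exact abs_le.2 (by constructor <;> linarith [abs_le.1 (hx_abs n)])
  · simp only [coe_add_smul, lp.coeFn_add, Pi.add_apply, lp.single_apply_self]
    ring

theorem two_sequences_in_sphere_weakly_converging
    (X : Submodule ℝ ellInfty) (hX : IsClosed (X : Set ellInfty))
    (hc0 : ∀ y : ellInfty, Tendsto (fun n => y n) atTop (𝓝 (0 : ℝ)) → y ∈ X)
    (x : X) (hx : ‖x‖ ≤ 1) :
    ∃ y z : ℕ → X, (∀ n, ‖y n‖ = 1) ∧ (∀ n, ‖z n‖ = 1) ∧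
      (∀ f : StrongDual ℝ X, Tendsto (fun k => f (y k)) atTop (𝓝 (f x))) ∧
      (∀ f : StrongDual ℝ X, Tendsto (fun k => f (z k)) atTop (𝓝 (f x))) ∧
      ∀ n : ℕ, (y n : ellInfty) n - (z n : ellInfty) n = 2 :=
  two_sequences_in_sphere_weakly_converging_general X hc0 x hx
end
end

section
/- Let X be a real Banach space such that X = c₀ ⊕_∞ Z (the ℓ∞-direct sum) for some closed subspace Z. Then there is a sequence (fₙ) in the unit sphere of X* such that for every x in the closed unit ball of X there are two sequences (yₙ), (zₙ) in the unit sphere of X which converge weakly to x and such that fₙ(yₙ − zₙ) = 2 for every n ∈ ℕ. -/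
/-!
By `hmax`, `(c, z) ↦ e c + z` is a linear isometry from `c₀ × Z` (sup norm) onto `X`, so it
suffices to treat `X = c₀ × Z`. Take `fₙ` to be the `n`-th coordinate of the `c₀`-part. For
`x = (u, w)` in the unit ball, replace the `k`-th coordinate of `u` by `1`, resp. by `-1`: both
points lie on the unit sphere and they differ by `2 eₖ`, so `fₖ` takes the value `2` on the
difference. The perturbations are `(1 - u k) eₖ` and `-(1 + u k) eₖ` with bounded coefficients,
and `eₖ → 0` weakly because every functional on `c₀` is absolutely summable on the unit vectors;
hence both sequences converge weakly to `x`.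
-/

noncomputable section

open Filter Topology ZeroAtInfty

namespace ZeroAtInftyContinuousMap

section Norm

variable {α β : Type*} [TopologicalSpace α] [NormedAddCommGroup β]

theorem norm_apply_le_norm (f : C₀(α, β)) (a : α) : ‖f a‖ ≤ ‖f‖ := by
  rw [← norm_toBCF_eq_norm]
  exact f.toBCF.norm_coe_le_norm a

theorem norm_le_of_forall_norm_apply_le {f : C₀(α, β)} {c : ℝ} (hc : 0 ≤ c)
    (h : ∀ a, ‖f a‖ ≤ c) : ‖f‖ ≤ c := by
  rw [← norm_toBCF_eq_norm]
  exact (BoundedContinuousFunction.norm_le hc).2 h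

variable (𝕜 : Type*) [NontriviallyNormedField 𝕜] [NormedSpace 𝕜 β]

def evalCLM (a : α) : C₀(α, β) →L[𝕜] β :=
  LinearMap.mkContinuous
    { toFun := fun f => f a
      map_add' := fun _ _ => rfl
      map_smul' := fun _ _ => rfl }
    1 fun f => by simpa using f.norm_apply_le_norm a

@[simp]
theorem evalCLM_apply (a : α) (f : C₀(α, β)) : evalCLM 𝕜 a f = f a := rfl

theorem norm_evalCLM_le (a : α) : ‖(evalCLM 𝕜 a : C₀(α, β) →L[𝕜] β)‖ ≤ 1 :=
  LinearMap.mkContinuous_norm_le _ zero_le_one _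

end Norm

def single (k : ℕ) (r : ℝ) : C₀(ℕ, ℝ) where
  toFun := Pi.single k r
  continuous_toFun := continuous_of_discreteTopology
  zero_at_infty' := by
    rw [cocompact_eq_cofinite, Nat.cofinite_eq_atTop]
    refine tendsto_const_nhds.congr' ?_
    filter_upwards [eventually_ne_atTop k] with j hj
    simp [hj]

@[simp]
theorem single_apply (k : ℕ) (r : ℝ) (j : ℕ) : single k r j = if j = k then r else 0 :=
  Pi.single_apply k r j

theorem single_eq_smul_single_one (k : ℕ) (r : ℝ) : single k r = r • single k 1 := by
  ext j
  rcases eq_or_ne j k with rfl | h <;> simp [*]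

@[simp]
theorem norm_single (k : ℕ) (r : ℝ) : ‖single k r‖ = |r| := by
  refine le_antisymm (norm_le_of_forall_norm_apply_le (abs_nonneg r) fun j => ?_) ?_
  · rcases eq_or_ne j k with rfl | h <;> simp [*]
  · simpa using (single k r).norm_apply_le_norm k

theorem norm_add_single {u : C₀(ℕ, ℝ)} (hu : ‖u‖ ≤ 1) {k : ℕ} {t : ℝ} (ht : |u k + t| = 1) :
    ‖u + single k t‖ = 1 := by
  refine le_antisymm (norm_le_of_forall_norm_apply_le zero_le_one fun j => ?_) ?_
  · rcases eq_or_ne j k with rfl | h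
    · simpa using ht.le
    · simpa [h] using (u.norm_apply_le_norm j).trans hu
  · simpa [ht] using (u + single k t).norm_apply_le_norm k

theorem tendsto_atTop_zero (u : C₀(ℕ, ℝ)) : Tendsto u atTop (𝓝 0) := by
  simpa [cocompact_eq_cofinite, Nat.cofinite_eq_atTop] using u.zero_at_infty'

theorem norm_sum_single_le {s : Finset ℕ} {ε : ℕ → ℝ} (hε : ∀ k, |ε k| ≤ 1) :
    ‖∑ k ∈ s, single k (ε k)‖ ≤ 1 := by
  refine norm_le_of_forall_norm_apply_le zero_le_one fun j => ?_
  rw [← evalCLM_apply ℝ, map_sum]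
  simp only [evalCLM_apply, single_apply, Finset.sum_ite_eq]
  split_ifs
  · exact hε j
  · simp

/-- Test `φ` against sums of signed unit vectors, all of which lie in the unit ball. -/
theorem summable_abs_apply_single_one (φ : StrongDual ℝ C₀(ℕ, ℝ)) :
    Summable fun k => |φ (single k 1)| := by
  refine summable_of_sum_range_le (fun _ => abs_nonneg _) (c := ‖φ‖) fun n => ?_
  let ε : ℕ → ℝ := fun k => SignType.sign (φ (single k 1))
  have hε : ∀ k, |ε k| ≤ 1 := fun k => by
    simp only [ε]
    generalize SignType.sign (φ (single k 1)) = s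
    cases s <;> simp
  have hsum : ∑ k ∈ Finset.range n, |φ (single k 1)| =
      φ (∑ k ∈ Finset.range n, single k (ε k)) := by
    simp [map_sum, single_eq_smul_single_one _ (ε _), ε]
  calc ∑ k ∈ Finset.range n, |φ (single k 1)|
      ≤ ‖φ‖ * ‖∑ k ∈ Finset.range n, single k (ε k)‖ :=
        hsum ▸ (le_abs_self _).trans (φ.le_opNorm _)
    _ ≤ ‖φ‖ := mul_le_of_le_one_right (norm_nonneg φ) (norm_sum_single_le hε)

theorem tendsto_apply_single {c : ℕ → ℝ} {a : ℝ} (hc : Tendsto c atTop (𝓝 a))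
    (φ : StrongDual ℝ C₀(ℕ, ℝ)) : Tendsto (fun k => φ (single k (c k))) atTop (𝓝 0) := by
  have hφ : Tendsto (fun k => φ (single k 1)) atTop (𝓝 0) :=
    tendsto_zero_iff_abs_tendsto_zero _ |>.2 (summable_abs_apply_single_one φ).tendsto_atTop_zero
  simpa [single_eq_smul_single_one _ (c _)] using hc.mul hφ

end ZeroAtInftyContinuousMap

open ZeroAtInftyContinuousMap

def LinearIsometryEquiv.prodCongr {𝕜 E F G H : Type*} [NormedField 𝕜]
    [SeminormedAddCommGroup E] [SeminormedAddCommGroup F] [SeminormedAddCommGroup G]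
    [SeminormedAddCommGroup H] [NormedSpace 𝕜 E] [NormedSpace 𝕜 F] [NormedSpace 𝕜 G]
    [NormedSpace 𝕜 H] (e₁ : E ≃ₗᵢ[𝕜] F) (e₂ : G ≃ₗᵢ[𝕜] H) : (E × G) ≃ₗᵢ[𝕜] F × H :=
  { e₁.toLinearEquiv.prodCongr e₂.toLinearEquiv with
    norm_map' := fun p => by simp [Prod.norm_def] }

def Submodule.prodLinearIsometryEquivOfIsCompl {𝕜 X : Type*} [NormedField 𝕜]
    [SeminormedAddCommGroup X] [NormedSpace 𝕜 X] {C Z : Submodule 𝕜 X} (hCZ : IsCompl C Z)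
    (hmax : ∀ c ∈ C, ∀ z ∈ Z, ‖c + z‖ = max ‖c‖ ‖z‖) : (C × Z) ≃ₗᵢ[𝕜] X :=
  { C.prodEquivOfIsCompl Z hCZ with
    norm_map' := fun p => hmax _ p.1.2 _ p.2.2 }

def HasDiameterTwoFunctionalSequence (V : Type*) [NormedAddCommGroup V] [NormedSpace ℝ V] :
    Prop :=
  ∃ f : ℕ → StrongDual ℝ V, (∀ n, ‖f n‖ = 1) ∧
    ∀ x : V, ‖x‖ ≤ 1 →
      ∃ y z : ℕ → V, (∀ n, ‖y n‖ = 1) ∧ (∀ n, ‖z n‖ = 1) ∧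
        (∀ g : StrongDual ℝ V, Tendsto (fun k => g (y k)) atTop (𝓝 (g x))) ∧
        (∀ g : StrongDual ℝ V, Tendsto (fun k => g (z k)) atTop (𝓝 (g x))) ∧
        ∀ n : ℕ, f n (y n - z n) = 2

theorem HasDiameterTwoFunctionalSequence.of_linearIsometryEquiv {V X : Type*}
    [NormedAddCommGroup V] [NormedSpace ℝ V] [NormedAddCommGroup X] [NormedSpace ℝ X]
    (Φ : V ≃ₗᵢ[ℝ] X) (hV : HasDiameterTwoFunctionalSequence V) :
    HasDiameterTwoFunctionalSequence X := by
  obtain ⟨f, hf, hfyz⟩ := hV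
  refine ⟨fun n => (f n).comp ((Φ.symm : X ≃ₗᵢ[ℝ] V) : X →L[ℝ] V), fun n => ?_, fun x hx => ?_⟩
  · rw [ContinuousLinearMap.opNorm_comp_linearIsometryEquiv, hf]
  obtain ⟨y, z, hy, hz, hyx, hzx, hyz⟩ := hfyz (Φ.symm x) (by simpa using hx)
  refine ⟨Φ ∘ y, Φ ∘ z, by simpa using hy, by simpa using hz, fun g => ?_, fun g => ?_,
    fun n => by simpa using hyz n⟩
  · simpa using hyx (g.comp (Φ : V →L[ℝ] X))
  · simpa using hzx (g.comp (Φ : V →L[ℝ] X))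

section C0Prod

variable {W : Type*} [NormedAddCommGroup W] [NormedSpace ℝ W]

theorem norm_evalCLM_comp_fst (n : ℕ) :
    ‖(evalCLM ℝ n).comp (ContinuousLinearMap.fst ℝ C₀(ℕ, ℝ) W)‖ = 1 := by
  refine le_antisymm ?_ ?_
  · calc _ ≤ ‖(evalCLM ℝ n : C₀(ℕ, ℝ) →L[ℝ] ℝ)‖ * ‖ContinuousLinearMap.fst ℝ C₀(ℕ, ℝ) W‖ :=
          ContinuousLinearMap.opNorm_comp_le _ _
      _ ≤ 1 * 1 := by
          gcongr
          exacts [norm_evalCLM_le ℝ n, ContinuousLinearMap.norm_fst_le _ _ _]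
      _ = 1 := one_mul 1
  · simpa using ((evalCLM ℝ n).comp (ContinuousLinearMap.fst ℝ C₀(ℕ, ℝ) W)).unit_le_opNorm
      (single n 1, 0) (by simp)

theorem tendsto_apply_add_single_prod (g : StrongDual ℝ (C₀(ℕ, ℝ) × W)) (u : C₀(ℕ, ℝ)) (w : W)
    {c : ℕ → ℝ} {a : ℝ} (hc : Tendsto c atTop (𝓝 a)) :
    Tendsto (fun k => g (u + single k (c k), w)) atTop (𝓝 (g (u, w))) := by
  have hsplit : ∀ k, g (u + single k (c k), w) =
      g (u, w) + (g.comp (ContinuousLinearMap.inl ℝ _ W)) (single k (c k)) := fun k => by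
    rw [ContinuousLinearMap.comp_apply, ← map_add, ContinuousLinearMap.inl_apply,
      Prod.mk_add_mk, add_zero]
  have hlim := (tendsto_const_nhds (x := g (u, w))).add
    (tendsto_apply_single hc (g.comp (ContinuousLinearMap.inl ℝ _ W)))
  rw [add_zero] at hlim
  exact hlim.congr fun k => (hsplit k).symm

theorem hasDiameterTwoFunctionalSequence_c0_prod :
    HasDiameterTwoFunctionalSequence (C₀(ℕ, ℝ) × W) := by
  refine ⟨fun n => (evalCLM ℝ n).comp (ContinuousLinearMap.fst ℝ _ W), norm_evalCLM_comp_fst,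
    ?_⟩
  rintro ⟨u, w⟩ hx
  obtain ⟨hu, hw⟩ : ‖u‖ ≤ 1 ∧ ‖w‖ ≤ 1 := max_le_iff.1 hx
  have hnorm : ∀ k t, |u k + t| = 1 → ‖(u + single k t, w)‖ = 1 := fun k t ht => by
    rw [Prod.norm_mk, norm_add_single hu ht, max_eq_left hw]
  refine ⟨fun k => (u + single k (1 - u k), w), fun k => (u + single k (-(1 + u k)), w),
    fun k => hnorm k _ (by simp), fun k => hnorm k _ (by simp),
    fun g => tendsto_apply_add_single_prod g u w (u.tendsto_atTop_zero.const_sub 1),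
    fun g => tendsto_apply_add_single_prod g u w (u.tendsto_atTop_zero.const_add 1).neg,
    fun n => ?_⟩
  simp only [ContinuousLinearMap.comp_apply, ContinuousLinearMap.coe_fst', Prod.mk_sub_mk,
    evalCLM_apply, coe_sub, coe_add, Pi.sub_apply, Pi.add_apply, single_apply, if_pos]
  ring

end C0Prod

theorem sequence_of_functionals_for_c0_infty_sum_general
    (X : Type*) [NormedAddCommGroup X] [NormedSpace ℝ X]
    (C Z : Submodule ℝ X)
    (hcompl : IsCompl C Z)
    (e : C₀(ℕ, ℝ) ≃ₗᵢ[ℝ] C)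
    (hmax : ∀ c ∈ C, ∀ z ∈ Z, ‖c + z‖ = max ‖c‖ ‖z‖) :
    ∃ f : ℕ → StrongDual ℝ X, (∀ n, ‖f n‖ = 1) ∧
      ∀ x : X, ‖x‖ ≤ 1 →
        ∃ y z : ℕ → X, (∀ n, ‖y n‖ = 1) ∧ (∀ n, ‖z n‖ = 1) ∧
          (∀ g : StrongDual ℝ X, Tendsto (fun k => g (y k)) atTop (𝓝 (g x))) ∧
          (∀ g : StrongDual ℝ X, Tendsto (fun k => g (z k)) atTop (𝓝 (g x))) ∧
          ∀ n : ℕ, f n (y n - z n) = 2 :=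
  hasDiameterTwoFunctionalSequence_c0_prod.of_linearIsometryEquiv
    ((e.prodCongr (.refl ℝ Z)).trans (Submodule.prodLinearIsometryEquivOfIsCompl hcompl hmax))

theorem sequence_of_functionals_for_c0_infty_sum
    (X : Type*) [NormedAddCommGroup X] [NormedSpace ℝ X] [CompleteSpace X]
    (C Z : Submodule ℝ X) (hC : IsClosed (C : Set X)) (hZ : IsClosed (Z : Set X))
    (hcompl : IsCompl C Z)
    (e : C₀(ℕ, ℝ) ≃ₗᵢ[ℝ] C)
    (hmax : ∀ c ∈ C, ∀ z ∈ Z, ‖c + z‖ = max ‖c‖ ‖z‖) :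
    ∃ f : ℕ → StrongDual ℝ X, (∀ n, ‖f n‖ = 1) ∧
      ∀ x : X, ‖x‖ ≤ 1 →
        ∃ y z : ℕ → X, (∀ n, ‖y n‖ = 1) ∧ (∀ n, ‖z n‖ = 1) ∧
          (∀ g : StrongDual ℝ X, Tendsto (fun k => g (y k)) atTop (𝓝 (g x))) ∧
          (∀ g : StrongDual ℝ X, Tendsto (fun k => g (z k)) atTop (𝓝 (g x))) ∧
          ∀ n : ℕ, f n (y n - z n) = 2 :=
  sequence_of_functionals_for_c0_infty_sum_general X C Z hcompl e hmax
end
end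

section
/- Let X be a real Banach space and suppose that there is a sequence (fₙ) in the unit sphere of X* such that for every x in the closed unit ball of X there are two sequences (yₙ), (zₙ) in the unit sphere of X which converge weakly to x and such that fₙ(yₙ − zₙ) = 2 for every n ∈ ℕ. Let R : X → Y be a compact linear operator into a Banach space Y and define an equivalent norm on X by |||x||| = ‖x‖_X + ‖R(x)‖_Y. Then there is a sequence (gₙ) in the unit sphere of (X,|||·|||)* such that, given x ∈ X with |||x||| = 1, there exist two sequences (ỹₙ), (z̃ₙ) in the unit ball of (X,|||·|||) that both converge weakly to x and such that liminfₙ gₙ(ỹₙ − z̃ₙ) ≥ 2(1 + ‖R‖)⁻¹. -/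
noncomputable section
open NormedSpace Filter Topology

variable {X : Type*} [NormedAddCommGroup X] [NormedSpace ℝ X]

/-- The dual norm associated to an equivalent norm `p`. -/
def dualNormOf (p : X → ℝ) (f : StrongDual ℝ X) : ℝ :=
  sSup ((fun x => |f x|) '' {x : X | p x ≤ 1})

/-!
Renormalise `fₙ` in the dual of the graph norm `|||x||| = ‖x‖ + ‖R x‖`: since
`‖φ‖ / (1 + ‖R‖) ≤ |||φ|||* ≤ ‖φ‖`, the functionals `gₙ = fₙ / |||fₙ|||*` lie on the new dual sphere
and dominate `fₙ` wherever `fₙ ≥ 0`.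

Given `|||x||| = 1`, apply the hypothesis to `x / ‖x‖` and shrink the resulting unit vectors
`yₙ, zₙ` by `sₙ = (1 + ‖R yₙ‖)⁻¹`, `tₙ = (1 + ‖R zₙ‖)⁻¹` onto the new unit sphere. Because `R` is
compact it turns the bounded weakly convergent sequences `yₙ, zₙ` into norm convergent ones, so
`sₙ, tₙ → (1 + ‖R (x / ‖x‖)‖)⁻¹ = ‖x‖` and the shrunk sequences still converge weakly to `x`.
Finally `fₙ yₙ = 1`, `fₙ zₙ = -1` give `gₙ (sₙ yₙ - tₙ zₙ) ≥ sₙ + tₙ → 2 ‖x‖ ≥ 2 / (1 + ‖R‖)`.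
-/

theorem dualNormOf_smul (p : X → ℝ) (c : ℝ) (φ : StrongDual ℝ X) :
    dualNormOf p (c • φ) = |c| * dualNormOf p φ := by
  rw [dualNormOf, dualNormOf, ← smul_eq_mul, ← Real.sSup_smul_of_nonneg (abs_nonneg c),
    ← Set.image_smul, Set.image_image]
  simp only [smul_apply, smul_eq_mul, abs_mul]

theorem bddAbove_abs_apply {p : X → ℝ} (hp : ∀ x, ‖x‖ ≤ p x) (φ : StrongDual ℝ X) :
    BddAbove ((fun x => |φ x|) '' {x | p x ≤ 1}) := by
  refine ⟨‖φ‖, ?_⟩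
  rintro _ ⟨x, hx, rfl⟩
  simpa using φ.le_opNorm_of_le ((hp x).trans hx)

theorem abs_apply_le_dualNormOf {p : X → ℝ} (hp : ∀ x, ‖x‖ ≤ p x) (φ : StrongDual ℝ X) {x : X}
    (hx : p x ≤ 1) : |φ x| ≤ dualNormOf p φ :=
  le_csSup (bddAbove_abs_apply hp φ) ⟨x, hx, rfl⟩

theorem dualNormOf_le_norm {p : X → ℝ} (hp : ∀ x, ‖x‖ ≤ p x) (φ : StrongDual ℝ X) :
    dualNormOf p φ ≤ ‖φ‖ := by
  refine Real.sSup_le ?_ (norm_nonneg φ)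
  rintro _ ⟨x, hx, rfl⟩
  simpa using φ.le_opNorm_of_le ((hp x).trans hx)

theorem abs_apply_le_dualNormOf_mul {p : Seminorm ℝ X} (hp : ∀ x, ‖x‖ ≤ p x)
    (φ : StrongDual ℝ X) (x : X) : |φ x| ≤ dualNormOf p φ * p x := by
  rcases eq_or_ne x 0 with rfl | hx
  · simp
  have hpx : 0 < p x := (norm_pos_iff.2 hx).trans_le (hp x)
  have hunit : p ((p x)⁻¹ • x) ≤ 1 := by
    rw [map_smul_eq_mul, Real.norm_eq_abs, abs_of_pos (inv_pos.2 hpx), inv_mul_cancel₀ hpx.ne']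
  have := abs_apply_le_dualNormOf hp φ hunit
  rwa [map_smul, smul_eq_mul, abs_mul, abs_of_pos (inv_pos.2 hpx), inv_mul_le_iff₀ hpx,
    mul_comm] at this

theorem norm_le_mul_dualNormOf {p : Seminorm ℝ X} (hp : ∀ x, ‖x‖ ≤ p x) {C : ℝ} (hC₀ : 0 ≤ C)
    (hC : ∀ x, p x ≤ C * ‖x‖) (φ : StrongDual ℝ X) : ‖φ‖ ≤ C * dualNormOf p φ := by
  have hd : 0 ≤ dualNormOf p φ := Real.sSup_nonneg (by rintro _ ⟨x, -, rfl⟩; exact abs_nonneg _)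
  refine φ.opNorm_le_bound (mul_nonneg hC₀ hd) fun x => ?_
  calc ‖φ x‖ ≤ dualNormOf p φ * p x := abs_apply_le_dualNormOf_mul hp φ x
    _ ≤ dualNormOf p φ * (C * ‖x‖) := by gcongr; exact hC x
    _ = C * dualNormOf p φ * ‖x‖ := by ring

theorem dualNormOf_inv_smul_self {p : X → ℝ} {φ : StrongDual ℝ X} (h : 0 < dualNormOf p φ) :
    dualNormOf p ((dualNormOf p φ)⁻¹ • φ) = 1 := by
  rw [dualNormOf_smul, abs_inv, abs_of_pos h, inv_mul_cancel₀ h.ne']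

theorem apply_sub_le_two {p : Seminorm ℝ X} (hp : ∀ x, ‖x‖ ≤ p x) {φ : StrongDual ℝ X}
    (hφ : dualNormOf p φ ≤ 1) {u v : X} (hu : p u ≤ 1) (hv : p v ≤ 1) : φ (u - v) ≤ 2 :=
  calc φ (u - v) ≤ dualNormOf p φ * p (u - v) :=
        (le_abs_self _).trans (abs_apply_le_dualNormOf_mul hp φ _)
    _ ≤ 1 * (1 + 1) :=
        mul_le_mul hφ ((map_sub_le_add p u v).trans (add_le_add hu hv)) (apply_nonneg p _)
          zero_le_one
    _ = 2 := by norm_num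

theorem apply_smul_sub_smul_of_apply_sub_eq_two {f : StrongDual ℝ X} {y z : X} (hf : ‖f‖ ≤ 1)
    (hy : ‖y‖ ≤ 1) (hz : ‖z‖ ≤ 1) (h : f (y - z) = 2) (s t : ℝ) : f (s • y - t • z) = s + t := by
  have hfy := abs_le.1 ((f.le_opNorm_of_le hy).trans (mul_le_one₀ hf zero_le_one le_rfl))
  have hfz := abs_le.1 ((f.le_opNorm_of_le hz).trans (mul_le_one₀ hf zero_le_one le_rfl))
  rw [map_sub] at h
  have hfy' : f y = 1 := by linarith [hfy.2, hfz.1]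
  have hfz' : f z = -1 := by linarith [hfy.2, hfz.1]
  rw [map_sub, map_smul, map_smul, hfy', hfz', smul_eq_mul, smul_eq_mul]
  ring

theorem tendsto_dual_apply_smul {ι : Type*} {l : Filter ι} {c : ι → ℝ} {a : ℝ} {u : ι → X} {v : X}
    (hc : Tendsto c l (𝓝 a)) (hu : ∀ g : StrongDual ℝ X, Tendsto (fun k => g (u k)) l (𝓝 (g v)))
    (g : StrongDual ℝ X) : Tendsto (fun k => g (c k • u k)) l (𝓝 (g (a • v))) := by
  simpa only [map_smul, smul_eq_mul] using hc.mul (hu g)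

theorem IsCompactOperator.tendsto_of_forall_dual_tendsto {𝕜 E F : Type*}
    [NontriviallyNormedField 𝕜] [NormedAddCommGroup E] [NormedSpace 𝕜 E] [NormedAddCommGroup F]
    [NormedSpace 𝕜 F] [SeparatingDual 𝕜 F] {T : E →L[𝕜] F} (hT : IsCompactOperator T)
    {u : ℕ → E} {v : E} {C : ℝ} (hb : ∀ n, ‖u n‖ ≤ C)
    (hw : ∀ g : StrongDual 𝕜 E, Tendsto (fun n => g (u n)) atTop (𝓝 (g v))) :
    Tendsto (fun n => T (u n)) atTop (𝓝 (T v)) := by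
  have hK := hT.isCompact_closure_image_closedBall C
  refine tendsto_of_subseq_tendsto fun ns hns => ?_
  have hmem : ∀ k, T (u (ns k)) ∈ closure (T '' Metric.closedBall 0 C) := fun k =>
    subset_closure ⟨u (ns k), by simpa using hb (ns k), rfl⟩
  obtain ⟨w, -, ms, hms, hlim⟩ := hK.tendsto_subseq hmem
  refine ⟨ms, ?_⟩
  -- the norm limit `w` of a subsequence is also its weak limit, which is `T v`
  have hwv : w = T v := by
    rw [SeparatingDual.eq_iff_forall_dual_eq (R := 𝕜)]
    intro g
    refine tendsto_nhds_unique ((g.continuous.tendsto w).comp hlim) ?_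
    simpa [Function.comp_def] using (hw (g.comp T)).comp (hns.comp hms.tendsto_atTop)
  simpa [hwv, Function.comp_def] using hlim

theorem le_liminf_of_tendsto_of_le {ι : Type*} {l : Filter ι} [l.NeBot] {u v : ι → ℝ} {a b : ℝ}
    (hv : Tendsto v l (𝓝 a)) (hvu : ∀ k, v k ≤ u k) (hub : ∀ k, u k ≤ b) :
    a ≤ liminf u l :=
  hv.liminf_eq ▸ liminf_le_liminf (.of_forall hvu) hv.isBoundedUnder_ge
    (isCoboundedUnder_ge_of_le l hub)

section GraphSeminorm

variable {Y : Type*} [NormedAddCommGroup Y] [NormedSpace ℝ Y] (R : X →L[ℝ] Y)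

def graphSeminorm : Seminorm ℝ X :=
  normSeminorm ℝ X + (normSeminorm ℝ Y).comp R.toLinearMap

@[simp]
theorem graphSeminorm_apply (x : X) : graphSeminorm R x = ‖x‖ + ‖R x‖ := rfl

theorem norm_le_graphSeminorm (x : X) : ‖x‖ ≤ graphSeminorm R x :=
  le_add_of_nonneg_right (norm_nonneg _)

theorem graphSeminorm_le (x : X) : graphSeminorm R x ≤ (1 + ‖R‖) * ‖x‖ := by
  rw [graphSeminorm_apply, add_mul, one_mul]
  gcongr
  exact R.le_opNorm x

theorem inv_one_add_opNorm_le_norm {x : X} (hx : graphSeminorm R x = 1) :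
    (1 + ‖R‖)⁻¹ ≤ ‖x‖ :=
  (inv_le_iff_one_le_mul₀' (by positivity)).2 (hx ▸ graphSeminorm_le R x)

theorem dualNormOf_graphSeminorm_pos {φ : StrongDual ℝ X} (hφ : φ ≠ 0) :
    0 < dualNormOf (graphSeminorm R) φ :=
  pos_of_mul_pos_right ((norm_pos_iff.2 hφ).trans_le (norm_le_mul_dualNormOf
    (norm_le_graphSeminorm R) (by positivity) (graphSeminorm_le R) φ)) (by positivity)

theorem graphSeminorm_inv_one_add_smul {u : X} (hu : ‖u‖ = 1) :
    graphSeminorm R ((1 + ‖R u‖)⁻¹ • u) = 1 := by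
  rw [map_smul_eq_mul, graphSeminorm_apply, hu, Real.norm_eq_abs, abs_of_pos (by positivity)]
  exact inv_mul_cancel₀ (by positivity)

theorem inv_one_add_norm_apply_inv_norm_smul {x : X} (hx : graphSeminorm R x = 1) :
    (1 + ‖R (‖x‖⁻¹ • x)‖)⁻¹ = ‖x‖ := by
  have hx₀ : ‖x‖ ≠ 0 := norm_ne_zero_iff.2 (by rintro rfl; simp at hx)
  rw [graphSeminorm_apply] at hx
  rw [map_smul, norm_smul, norm_inv, norm_norm, inv_eq_iff_eq_inv]
  field_simp
  linarith

variable {R}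

theorem tendsto_inv_one_add_norm_apply (hR : IsCompactOperator R) {x : X}
    (hx : graphSeminorm R x = 1) {u : ℕ → X} (hu : ∀ n, ‖u n‖ = 1)
    (hw : ∀ g : StrongDual ℝ X, Tendsto (fun k => g (u k)) atTop (𝓝 (g (‖x‖⁻¹ • x)))) :
    Tendsto (fun n => (1 + ‖R (u n)‖)⁻¹) atTop (𝓝 ‖x‖) := by
  have hRu := (hR.tendsto_of_forall_dual_tendsto (fun n => (hu n).le) hw).norm
  simpa only [inv_one_add_norm_apply_inv_norm_smul R hx] using
    (tendsto_const_nhds.add hRu).inv₀ (add_pos_of_pos_of_nonneg one_pos (norm_nonneg _)).ne'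

theorem tendsto_dual_apply_inv_one_add_smul (hR : IsCompactOperator R) {x : X}
    (hx : graphSeminorm R x = 1) {u : ℕ → X} (hu : ∀ n, ‖u n‖ = 1)
    (hw : ∀ g : StrongDual ℝ X, Tendsto (fun k => g (u k)) atTop (𝓝 (g (‖x‖⁻¹ • x))))
    (g : StrongDual ℝ X) :
    Tendsto (fun k => g ((1 + ‖R (u k)‖)⁻¹ • u k)) atTop (𝓝 (g x)) := by
  have hx₀ : ‖x‖ ≠ 0 := norm_ne_zero_iff.2 (by rintro rfl; simp at hx)
  simpa [smul_smul, hx₀] using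
    tendsto_dual_apply_smul (tendsto_inv_one_add_norm_apply hR hx hu hw) hw g

end GraphSeminorm

theorem transfer_of_diameter_two_property_general
    (X Y : Type*) [NormedAddCommGroup X] [NormedSpace ℝ X]
    [NormedAddCommGroup Y] [NormedSpace ℝ Y]
    (f : ℕ → StrongDual ℝ X) (hf : ∀ n, ‖f n‖ = 1)
    (hprop : ∀ x : X, ‖x‖ ≤ 1 →
      ∃ y z : ℕ → X, (∀ n, ‖y n‖ = 1) ∧ (∀ n, ‖z n‖ = 1) ∧
        (∀ g : StrongDual ℝ X, Tendsto (fun k => g (y k)) atTop (𝓝 (g x))) ∧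
        (∀ g : StrongDual ℝ X, Tendsto (fun k => g (z k)) atTop (𝓝 (g x))) ∧
        ∀ n : ℕ, f n (y n - z n) = 2)
    (R : X →L[ℝ] Y) (hR : IsCompactOperator R) :
    ∃ g : ℕ → StrongDual ℝ X,
      (∀ n, dualNormOf (fun x : X => ‖x‖ + ‖R x‖) (g n) = 1) ∧
      ∀ x : X, ‖x‖ + ‖R x‖ = 1 →
        ∃ ty tz : ℕ → X,
          (∀ n, ‖ty n‖ + ‖R (ty n)‖ ≤ 1) ∧ (∀ n, ‖tz n‖ + ‖R (tz n)‖ ≤ 1) ∧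
          (∀ h : StrongDual ℝ X, Tendsto (fun k => h (ty k)) atTop (𝓝 (h x))) ∧
          (∀ h : StrongDual ℝ X, Tendsto (fun k => h (tz k)) atTop (𝓝 (h x))) ∧
          2 / (1 + ‖R‖) ≤ liminf (fun n => g n (ty n - tz n)) atTop := by
  set d := fun n => dualNormOf (graphSeminorm R) (f n)
  have hd_pos n : 0 < d n := dualNormOf_graphSeminorm_pos R (norm_ne_zero_iff.1 (by simp [hf n]))
  have hd_le n : d n ≤ 1 := hf n ▸ dualNormOf_le_norm (norm_le_graphSeminorm R) (f n)
  have hg n : dualNormOf (graphSeminorm R) ((d n)⁻¹ • f n) = 1 :=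
    dualNormOf_inv_smul_self (hd_pos n)
  refine ⟨fun n => (d n)⁻¹ • f n, hg, fun x hx => ?_⟩
  obtain ⟨y, z, hy, hz, hwy, hwz, hfyz⟩ :=
    hprop _ (norm_smul_inv_norm (𝕜 := ℝ) (x := x) (by rintro rfl; simp at hx)).le
  have hty n := graphSeminorm_inv_one_add_smul R (hy n)
  have htz n := graphSeminorm_inv_one_add_smul R (hz n)
  refine ⟨_, _, fun n => (hty n).le, fun n => (htz n).le,
    tendsto_dual_apply_inv_one_add_smul hR hx hy hwy,
    tendsto_dual_apply_inv_one_add_smul hR hx hz hwz, ?_⟩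
  have hx_norm := inv_one_add_opNorm_le_norm R hx
  calc 2 / (1 + ‖R‖) ≤ ‖x‖ + ‖x‖ := by rw [div_eq_mul_inv]; linarith
    _ ≤ _ := by
      refine le_liminf_of_tendsto_of_le ((tendsto_inv_one_add_norm_apply hR hx hy hwy).add
        (tendsto_inv_one_add_norm_apply hR hx hz hwz)) (fun n => ?_)
        (fun n => apply_sub_le_two (norm_le_graphSeminorm R) (hg n).le (hty n).le (htz n).le)
      rw [smul_apply, smul_eq_mul, apply_smul_sub_smul_of_apply_sub_eq_two (hf n).le (hy n).le
        (hz n).le (hfyz n)]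
      exact le_mul_of_one_le_left (by positivity) (one_le_inv₀ (hd_pos n) |>.2 (hd_le n))

theorem transfer_of_diameter_two_property
    (X Y : Type*) [NormedAddCommGroup X] [NormedSpace ℝ X] [CompleteSpace X]
    [NormedAddCommGroup Y] [NormedSpace ℝ Y] [CompleteSpace Y]
    (f : ℕ → StrongDual ℝ X) (hf : ∀ n, ‖f n‖ = 1)
    (hprop : ∀ x : X, ‖x‖ ≤ 1 →
      ∃ y z : ℕ → X, (∀ n, ‖y n‖ = 1) ∧ (∀ n, ‖z n‖ = 1) ∧
        (∀ g : StrongDual ℝ X, Tendsto (fun k => g (y k)) atTop (𝓝 (g x))) ∧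
        (∀ g : StrongDual ℝ X, Tendsto (fun k => g (z k)) atTop (𝓝 (g x))) ∧
        ∀ n : ℕ, f n (y n - z n) = 2)
    (R : X →L[ℝ] Y) (hR : IsCompactOperator R) :
    ∃ g : ℕ → StrongDual ℝ X,
      (∀ n, dualNormOf (fun x : X => ‖x‖ + ‖R x‖) (g n) = 1) ∧
      ∀ x : X, ‖x‖ + ‖R x‖ = 1 →
        ∃ ty tz : ℕ → X,
          (∀ n, ‖ty n‖ + ‖R (ty n)‖ ≤ 1) ∧ (∀ n, ‖tz n‖ + ‖R (tz n)‖ ≤ 1) ∧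
          (∀ h : StrongDual ℝ X, Tendsto (fun k => h (ty k)) atTop (𝓝 (h x))) ∧
          (∀ h : StrongDual ℝ X, Tendsto (fun k => h (tz k)) atTop (𝓝 (h x))) ∧
          2 / (1 + ‖R‖) ≤ liminf (fun n => g n (ty n - tz n)) atTop :=
  transfer_of_diameter_two_property_general X Y f hf hprop R hR
end
end

section
/- Let X, Y be real Banach spaces and let R : X → Y be a bounded linear operator. Define an equivalent norm on X by |||x||| = ‖x‖_X + ‖R(x)‖_Y for x ∈ X. Then the closed unit ball of the dual space (X,|||·|||)* equals B_{X*} + R*(B_{Y*}), where B_{X*} is the closed unit ball of X* for the original dual norm, R* : Y* → X* is the adjoint operator, and B_{Y*} is the closed unit ball of Y*. -/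
/-!
The closed unit ball of `(X, |||·|||)*` consists of the functionals with `|f x| ≤ ‖x‖ + ‖R x‖`.
Such an `f` lives on the graph of `R` inside `X × Y`, where it is dominated by the seminorm
`‖x‖ + ‖y‖`; by Hahn–Banach it extends to `X × Y` under the same domination, and the
restrictions of the extension to the two factors are the required `g ∈ B_{X*}` and `h ∈ B_{Y*}`.
-/

noncomputable section
open NormedSpace

variable {X : Type*} [NormedAddCommGroup X] [NormedSpace ℝ X]

theorem Seminorm.abs_le_of_forall_le_one {E : Type*} [AddCommGroup E] [Module ℝ E]
    {p : Seminorm ℝ E} {f : E →ₗ[ℝ] ℝ} (hf : ∀ x, p x ≤ 1 → |f x| ≤ 1) (x : E) :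
    |f x| ≤ p x := by
  -- scaling by `(p x + ε)⁻¹` rather than `(p x)⁻¹` also covers `p x = 0`
  refine le_of_forall_pos_le_add fun ε hε => ?_
  have hpos : 0 < p x + ε := by positivity
  have hscaled : p ((p x + ε)⁻¹ • x) ≤ 1 := by
    rw [map_smul_eq_mul, Real.norm_of_nonneg (inv_nonneg.2 hpos.le), inv_mul_le_one₀ hpos]
    linarith
  have := hf _ hscaled
  rwa [map_smul, smul_eq_mul, abs_mul, abs_of_pos (inv_pos.2 hpos), inv_mul_le_one₀ hpos] at this

theorem dualNormOf_le_one_iff {p : Seminorm ℝ X} (hp : ∀ x, ‖x‖ ≤ p x) (f : StrongDual ℝ X) :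
    dualNormOf p f ≤ 1 ↔ ∀ x, |f x| ≤ p x := by
  have hbdd : BddAbove ((fun x => |f x|) '' {x | p x ≤ 1}) := by
    refine ⟨‖f‖, Set.forall_mem_image.2 fun x hx => ?_⟩
    calc |f x| ≤ ‖f‖ * ‖x‖ := f.le_opNorm x
      _ ≤ ‖f‖ * 1 := by gcongr; exact (hp x).trans hx
      _ = ‖f‖ := mul_one _
  rw [dualNormOf, csSup_le_iff hbdd ⟨_, 0, by simp, rfl⟩, Set.forall_mem_image]
  exact ⟨fun h => Seminorm.abs_le_of_forall_le_one (f := f.toLinearMap) h,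
    fun h x hx => (h x).trans hx⟩

theorem exists_dual_decomposition_of_le_norm_add_norm {X Y : Type*}
    [SeminormedAddCommGroup X] [NormedSpace ℝ X] [SeminormedAddCommGroup Y] [NormedSpace ℝ Y]
    (R : X →ₗ[ℝ] Y) (f : X →ₗ[ℝ] ℝ) (hf : ∀ x, f x ≤ ‖x‖ + ‖R x‖) :
    ∃ (g : StrongDual ℝ X) (h : StrongDual ℝ Y), ‖g‖ ≤ 1 ∧ ‖h‖ ≤ 1 ∧ ∀ x, f x = g x + h (R x) := by
  let p : Seminorm ℝ (X × Y) :=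
    (normSeminorm ℝ X).comp (LinearMap.fst ℝ X Y) + (normSeminorm ℝ Y).comp (LinearMap.snd ℝ X Y)
  have hp : ∀ x y, p (x, y) = ‖x‖ + ‖y‖ := fun _ _ => rfl
  obtain ⟨G, hGf, hGp⟩ := Module.Dual.exists_extension_of_le_seminorm_real R.graph
    (f ∘ₗ LinearMap.fst ℝ X Y ∘ₗ R.graph.subtype) (p := p) <| by
      rintro ⟨⟨x, y⟩, hxy⟩
      have hy : y = R x := (LinearMap.mem_graph_iff _ _).1 hxy
      simpa [hp, hy] using hf x
  refine ⟨(G ∘ₗ LinearMap.inl ℝ X Y).mkContinuous 1 fun x => by simpa [hp] using hGp (x, 0),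
    (G ∘ₗ LinearMap.inr ℝ X Y).mkContinuous 1 fun y => by simpa [hp] using hGp (0, y),
    LinearMap.mkContinuous_norm_le _ zero_le_one _, LinearMap.mkContinuous_norm_le _ zero_le_one _,
    fun x => ?_⟩
  calc f x = G (x, R x) := (hGf ⟨(x, R x), (LinearMap.mem_graph_iff _ _).2 rfl⟩).symm
    _ = G (x, 0) + G (0, R x) := by rw [← map_add, Prod.mk_add_mk, add_zero, zero_add]

theorem forall_abs_le_norm_add_norm_iff {X Y : Type*}
    [SeminormedAddCommGroup X] [NormedSpace ℝ X] [SeminormedAddCommGroup Y] [NormedSpace ℝ Y]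
    (R : X →L[ℝ] Y) (f : StrongDual ℝ X) :
    (∀ x, |f x| ≤ ‖x‖ + ‖R x‖) ↔
      ∃ (g : StrongDual ℝ X) (h : StrongDual ℝ Y), ‖g‖ ≤ 1 ∧ ‖h‖ ≤ 1 ∧ f = g + h.comp R := by
  constructor
  · intro hf
    obtain ⟨g, h, hg, hh, hfgh⟩ := exists_dual_decomposition_of_le_norm_add_norm R.toLinearMap
      f.toLinearMap fun x => (le_abs_self _).trans (hf x)
    exact ⟨g, h, hg, hh, ContinuousLinearMap.ext hfgh⟩
  · rintro ⟨g, h, hg, hh, rfl⟩ x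
    calc |g x + h (R x)| ≤ |g x| + |h (R x)| := abs_add_le _ _
      _ ≤ ‖g‖ * ‖x‖ + ‖h‖ * ‖R x‖ := add_le_add (g.le_opNorm x) (h.le_opNorm (R x))
      _ ≤ ‖x‖ + ‖R x‖ := by gcongr <;> exact mul_le_of_le_one_left (norm_nonneg _) ‹_›

theorem dual_ball_of_sum_norm_general
    (X Y : Type*) [NormedAddCommGroup X] [NormedSpace ℝ X]
    [NormedAddCommGroup Y] [NormedSpace ℝ Y]
    (R : X →L[ℝ] Y) :
    {f : StrongDual ℝ X | dualNormOf (fun x : X => ‖x‖ + ‖R x‖) f ≤ 1} =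
      {f : StrongDual ℝ X | ∃ (g : StrongDual ℝ X) (h : StrongDual ℝ Y),
        ‖g‖ ≤ 1 ∧ ‖h‖ ≤ 1 ∧ f = g + h.comp R} := by
  let p : Seminorm ℝ X := normSeminorm ℝ X + (normSeminorm ℝ Y).comp R.toLinearMap
  have hp : ∀ x, ‖x‖ ≤ p x := fun x => le_add_of_nonneg_right (norm_nonneg (R x))
  ext f
  exact (dualNormOf_le_one_iff hp f).trans (forall_abs_le_norm_add_norm_iff R f)

theorem dual_ball_of_sum_norm
    (X Y : Type*) [NormedAddCommGroup X] [NormedSpace ℝ X] [CompleteSpace X]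
    [NormedAddCommGroup Y] [NormedSpace ℝ Y] [CompleteSpace Y]
    (R : X →L[ℝ] Y) :
    {f : StrongDual ℝ X | dualNormOf (fun x : X => ‖x‖ + ‖R x‖) f ≤ 1} =
      {f : StrongDual ℝ X | ∃ (g : StrongDual ℝ X) (h : StrongDual ℝ Y),
        ‖g‖ ≤ 1 ∧ ‖h‖ ≤ 1 ∧ f = g + h.comp R} :=
  dual_ball_of_sum_norm_general X Y R
end
end
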